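/- Let A, B, C be noncollinear points in EuclideanSpace ℝ (Fin 2). If the angle at A exceeds the angle at B, i.e. ∠ B A C > ∠ A B C, then the bisector from A is shorter than the bisector from B: t_A < t_B. (A larger angle of a triangle has a shorter internal bisector.) -/

import Mathlib

/-!
Stewart's theorem gives `t_A² = b c ((b + c)² - a²) / (b + c)²` in the side lengths
`a = BC`, `b = CA`, `c = AB`. The larger angle at `A` lies opposite the longer side, so `b < a`,
and after clearing denominators `t_B² - t_A²` factors as
`c (a + b + c) (a - b) (c³ + (a + b) c² + 3 a b c + a b (a + b))`, which is positive.
-/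

open EuclideanGeometry Real

/-- The length of the internal angle bisector from vertex `A` in triangle `A B C`:
the distance from `A` to the point on `BC` dividing it in ratio `AB : AC`. -/
noncomputable def bisectorLength (A B C : EuclideanSpace ℝ (Fin 2)) : ℝ :=
  dist A (((dist C A) / (dist C A + dist A B)) • B + ((dist A B) / (dist C A + dist A B)) • C)

theorem dist_smul_add_smul_sq {V : Type*} [NormedAddCommGroup V] [InnerProductSpace ℝ V]
    (p q r : V) {s t : ℝ} (hst : s + t = 1) :
    dist p (s • q + t • r) ^ 2 =
      s * dist p q ^ 2 + t * dist p r ^ 2 - s * t * dist q r ^ 2 := by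
  have hsplit : p - (s • q + t • r) = s • (p - q) + t • (p - r) := by
    rw [smul_sub, smul_sub, sub_add_sub_comm, ← add_smul, hst, one_smul]
  have hqr : q - r = (p - r) - (p - q) := by abel
  rw [dist_eq_norm p, dist_eq_norm p q, dist_eq_norm p r, dist_eq_norm q r, hsplit, hqr]
  generalize p - q = x
  generalize p - r = y
  rw [norm_add_sq_real, norm_sub_sq_real, real_inner_smul_left, real_inner_smul_right,
    norm_smul, norm_smul, real_inner_comm, mul_pow, mul_pow, Real.norm_eq_abs, Real.norm_eq_abs,
    sq_abs, sq_abs]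
  have ht : t = 1 - s := by linarith
  subst ht
  ring

theorem bisectorLength_sq {A B C : EuclideanSpace ℝ (Fin 2)} (hAB : A ≠ B) :
    bisectorLength A B C ^ 2 = dist C A * dist A B * ((dist C A + dist A B) ^ 2 - dist B C ^ 2)
      / (dist C A + dist A B) ^ 2 := by
  have hs : dist C A + dist A B ≠ 0 := by positivity [dist_pos.2 hAB]
  rw [bisectorLength, dist_smul_add_smul_sq _ _ _ (by field_simp), dist_comm A C]
  field_simp
  ring

theorem bisector_sq_lt_of_lt {a b c : ℝ} (hb : 0 < b) (hc : 0 < c) (hba : b < a) :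
    b * c * ((b + c) ^ 2 - a ^ 2) / (b + c) ^ 2 < c * a * ((c + a) ^ 2 - b ^ 2) / (c + a) ^ 2 := by
  have ha : 0 < a := hb.trans hba
  rw [div_lt_div_iff₀ (by positivity) (by positivity), ← sub_pos]
  have hcubic : 0 < c ^ 3 + (a + b) * c ^ 2 + 3 * a * b * c + a * b * (a + b) := by positivity
  calc (0 : ℝ)
      < c * (a + b + c) * (a - b) * (c ^ 3 + (a + b) * c ^ 2 + 3 * a * b * c + a * b * (a + b)) :=
        mul_pos (mul_pos (by positivity) (sub_pos.2 hba)) hcubic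
    _ = _ := by ring

theorem bisector_lt_of_angle_gt (A B C : EuclideanSpace ℝ (Fin 2))
    (h : ¬ Collinear ℝ ({A, B, C} : Set (EuclideanSpace ℝ (Fin 2))))
    (hang : ∠ A B C < ∠ B A C) :
    bisectorLength A B C < bisectorLength B C A := by
  have h' : ¬ Collinear ℝ ({C, A, B} : Set (EuclideanSpace ℝ (Fin 2))) := by
    rwa [Set.insert_comm, Set.pair_comm]
  have hside : dist C A < dist B C := by
    rw [dist_comm B C]
    apply dist_lt_of_angle_lt h'
    rwa [angle_comm C B A, angle_comm C A B]
  refine lt_of_pow_lt_pow_left₀ 2 dist_nonneg ?_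
  rw [bisectorLength_sq (ne₁₂_of_not_collinear h),
    bisectorLength_sq (ne₂₃_of_not_collinear h)]
  exact bisector_sq_lt_of_lt (dist_pos.2 (ne₁₂_of_not_collinear h'))
    (dist_pos.2 (ne₁₂_of_not_collinear h)) hside
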